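/- arXiv:1112.3139 — 2 statements merged into one kernel-verified Lean document; each statement's English description precedes it below -/
import Mathlib

section
/- Closed form for the total protein probability: for all real a, b with 0 < a < b, all real ν > 0 and θ with 0 < θ ≤ 1, setting C = M(a, b, ν(1−θ)), the steady-state probabilities satisfy, for every n ∈ ℕ, P_{0,n} + P_{1,n} = (1/C)(ν^n/n!)((a)_n/(b)_n)·M(a+n, b+n, −νθ). -/
open scoped BigOperators

/-- Pochhammer symbol `(a)ₙ = a(a+1)⋯(a+n−1)`, `(a)₀ = 1`. -/
noncomputable def poch (a : ℝ) (n : ℕ) : ℝ := ∏ k ∈ Finset.range n, (a + k)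

lemma poch_pos {a : ℝ} (ha : 0 < a) (n : ℕ) : 0 < poch a n :=
  Finset.prod_pos fun k _ => by positivity

lemma poch_succ_eq (a : ℝ) (n : ℕ) : poch a (n + 1) = a * poch (a + 1) n := by
  unfold poch
  rw [Finset.prod_range_succ', mul_comm]
  congr 1
  · norm_num
  · apply Finset.prod_congr rfl
    intro i _
    push_cast
    ring

lemma poch_mul (a : ℝ) (n : ℕ) : a * poch (a + 1) n = poch a n * (a + n) := by
  rw [← poch_succ_eq]
  unfold poch
  rw [Finset.prod_range_succ]

lemma poch_le {a b : ℝ} (ha : 0 < a) (hab : a ≤ b) (n : ℕ) : poch a n ≤ poch b n := by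
  apply Finset.prod_le_prod
  · intro k _; positivity
  · intro k _; linarith

/-- Kummer's confluent hypergeometric function `M(a,b,z)`. -/
noncomputable def kummerM (a b z : ℝ) : ℝ :=
  ∑' k : ℕ, poch a k / poch b k * z ^ k / (Nat.factorial k : ℝ)

lemma kummer_summable {A B : ℝ} (z : ℝ) (hA : 0 < A) (hAB : A ≤ B) :
    Summable (fun k : ℕ => poch A k / poch B k * z ^ k / (Nat.factorial k : ℝ)) := by
  have hB : 0 < B := lt_of_lt_of_le hA hAB
  apply Summable.of_abs
  apply Summable.of_nonneg_of_le (fun k => abs_nonneg _) (fun k => ?_)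
    (Real.summable_pow_div_factorial |z|)
  have h1 : 0 < poch A k := poch_pos hA k
  have h2 : 0 < poch B k := poch_pos hB k
  have h3 : poch A k ≤ poch B k := poch_le hA hAB k
  rw [abs_div, abs_mul, abs_div, abs_pow, abs_of_pos h1, abs_of_pos h2,
    Nat.abs_cast]
  have hfk : (0:ℝ) < (Nat.factorial k : ℝ) := by positivity
  rw [div_le_div_iff₀ (by positivity) hfk]
  have : poch A k / poch B k ≤ 1 := (div_le_one h2).mpr h3
  calc poch A k / poch B k * |z| ^ k * (Nat.factorial k : ℝ)
      ≤ 1 * |z| ^ k * (Nat.factorial k : ℝ) := by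
        apply mul_le_mul_of_nonneg_right (mul_le_mul_of_nonneg_right this (by positivity)) hfk.le
    _ = |z| ^ k * (Nat.factorial k : ℝ) := by ring

/-- Contiguous relation: `(B−A)·M(A,B+1,z) + A·M(A+1,B+1,z) = B·M(A,B,z)`. -/
lemma kummer_contig {A B : ℝ} (z : ℝ) (hA : 0 < A) (hAB : A < B) :
    (B - A) * kummerM A (B + 1) z + A * kummerM (A + 1) (B + 1) z = B * kummerM A B z := by
  have hB : 0 < B := hA.trans hAB
  have hf := kummer_summable z hA (by linarith : A ≤ B + 1)
  have hg := kummer_summable z (by linarith : (0:ℝ) < A + 1) (by linarith : A + 1 ≤ B + 1)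
  have hh := kummer_summable z hA hAB.le
  unfold kummerM
  rw [← tsum_mul_left, ← tsum_mul_left, ← tsum_mul_left,
    ← Summable.tsum_add (hf.mul_left _) (hg.mul_left _)]
  apply tsum_congr
  intro k
  have hpA : (0:ℝ) < poch A k := poch_pos hA k
  have hpB : (0:ℝ) < poch B k := poch_pos hB k
  have hpB1 : (0:ℝ) < poch (B + 1) k := poch_pos (by linarith) k
  have hApA : A * poch (A + 1) k = poch A k * (A + k) := poch_mul A k
  have hBpB : B * poch (B + 1) k = poch B k * (B + k) := poch_mul B k
  have hfk : (0:ℝ) < (Nat.factorial k : ℝ) := by positivity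
  field_simp
  linear_combination (z ^ k * poch B k) * hApA -
    (poch A k * z ^ k) * hBpB

/-- Steady-state probability `P_{0,n}` of the binary gene model. -/
noncomputable def P0 (a b ν θ : ℝ) (n : ℕ) : ℝ :=
  (b - a) / (kummerM a b (ν * (1 - θ)) * b) * (ν ^ n / (Nat.factorial n : ℝ)) *
    (poch a n / poch (1 + b) n) * kummerM (a + n) (1 + b + n) (-(ν * θ))

/-- Steady-state probability `P_{1,n}` of the binary gene model. -/
noncomputable def P1 (a b ν θ : ℝ) (n : ℕ) : ℝ :=
  a / (kummerM a b (ν * (1 - θ)) * b) * (ν ^ n / (Nat.factorial n : ℝ)) *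
    (poch (1 + a) n / poch (1 + b) n) * kummerM (1 + a + n) (1 + b + n) (-(ν * θ))


/-- Closed form for the total protein probability. -/
theorem total_protein_probability (a b ν θ : ℝ) (ha : 0 < a) (hab : a < b)
    (hν : 0 < ν) (hθ0 : 0 < θ) (hθ1 : θ ≤ 1) (n : ℕ) :
    P0 a b ν θ n + P1 a b ν θ n =
      1 / kummerM a b (ν * (1 - θ)) * (ν ^ n / (Nat.factorial n : ℝ)) *
        (poch a n / poch b n) * kummerM (a + n) (b + n) (-(ν * θ)) := by
  have hb : 0 < b := ha.trans hab
  have hAn : (0:ℝ) < a + n := by positivity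
  have hBn : (0:ℝ) < b + n := by positivity
  have hABn : (a:ℝ) + n < b + n := by linarith
  have key := kummer_contig (-(ν * θ)) hAn hABn
  have hw : (0:ℝ) ≤ ν * (1 - θ) := by nlinarith
  have hsum := kummer_summable (ν * (1 - θ)) ha hab.le
  have hC1 : (1:ℝ) ≤ kummerM a b (ν * (1 - θ)) := by
    have h0 := Summable.le_tsum hsum 0 (fun i _ => by
      have h1 : (0:ℝ) < poch a i := poch_pos ha i
      have h2 : (0:ℝ) < poch b i := poch_pos hb i
      positivity)
    simpa [kummerM, poch] using h0
  have hC : kummerM a b (ν * (1 - θ)) ≠ 0 := by linarith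
  have hpa : (0:ℝ) < poch a n := poch_pos ha n
  have hpb : (0:ℝ) < poch b n := poch_pos hb n
  have hpb1 : (0:ℝ) < poch (1 + b) n := poch_pos (by linarith) n
  have e1 : (1:ℝ) + b + (n:ℝ) = (b + n) + 1 := by ring
  have e2 : (1:ℝ) + a + (n:ℝ) = (a + n) + 1 := by ring
  have e3 : b * poch (1 + b) n = poch b n * (b + n) := by
    rw [show (1:ℝ) + b = b + 1 by ring]; exact poch_mul b n
  have e4 : a * poch (1 + a) n = poch a n * (a + n) := by
    rw [show (1:ℝ) + a = a + 1 by ring]; exact poch_mul a n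
  have hfk : (0:ℝ) < (Nat.factorial n : ℝ) := by positivity
  unfold P0 P1
  rw [e1, e2]
  set K1 := kummerM (a + n) ((b + n) + 1) (-(ν * θ))
  set K2 := kummerM ((a + n) + 1) ((b + n) + 1) (-(ν * θ))
  set K3 := kummerM (a + n) (b + n) (-(ν * θ))
  set C := kummerM a b (ν * (1 - θ))
  field_simp
  linear_combination (poch b n * poch a n) * key +
    (poch b n * K2) * e4 -
    (poch a n * K3) * e3
end

section
/- Stationarity of the active-state probabilities: let μ⁰ > 0, μ¹ ≥ 0, γ > 0, ν > 0 be reals, and set a = μ⁰/(1+μ¹), b = (μ⁰+γ)/(1+μ¹), θ = 1/(1+μ¹), C = M(a, b, ν(1−θ)). Then for every n ∈ ℕ (with the convention P_{1,−1} = 0), the steady-state probabilities satisfy 0 = ν(P_{1,n−1} − P_{1,n}) + (n+1)·P_{1,n+1} − n·P_{1,n} + (μ⁰ + μ¹ n)·P_{0,n} − γ·P_{1,n}. -/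
open scoped BigOperators

lemma poch_succ (x : ℝ) (m : ℕ) : poch x (m+1) = poch x m * (x + m) :=
  Finset.prod_range_succ _ _

lemma poch_succ' (x : ℝ) (m : ℕ) : poch x (m+1) = x * poch (x+1) m := by
  rw [poch, Finset.prod_range_succ', mul_comm]
  simp only [Nat.cast_zero, add_zero]
  congr 1
  refine Finset.prod_congr rfl fun i _ => ?_
  push_cast
  ring

lemma poch_mul_eq (x : ℝ) (m : ℕ) : x * poch (1+x) m = poch x m * (x + m) := by
  rw [show (1:ℝ)+x = x+1 by ring, ← poch_succ', poch_succ]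

lemma poch_add (x : ℝ) (m k : ℕ) : poch x (m+k) = poch x m * poch (x + m) k := by
  rw [poch, poch, poch, Finset.prod_range_add]
  congr 1
  refine Finset.prod_congr rfl fun i _ => ?_
  push_cast; ring

lemma poch_pos_s7 {x : ℝ} (hx : 0 < x) (m : ℕ) : 0 < poch x m :=
  Finset.prod_pos fun i _ => by positivity

lemma poch_le_s7 {x y : ℝ} (hx : 0 < x) (hxy : x ≤ y) (m : ℕ) : poch x m ≤ poch y m :=
  Finset.prod_le_prod (fun i _ => by positivity) (fun i _ => by linarith)

lemma P1_eq (a b ν θ : ℝ) (n : ℕ) :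
    P1 a b ν θ n = a / (kummerM a b (ν*(1-θ)) * b) * (ν^n / (Nat.factorial n : ℝ)) *
      ∑' k : ℕ, poch (1+a) (n+k) / poch (1+b) (n+k) * (-(ν*θ))^k / (Nat.factorial k : ℝ) := by
  rw [P1, mul_assoc]
  congr 1
  rw [kummerM, ← tsum_mul_left]
  exact tsum_congr fun k => by rw [poch_add, poch_add]; ring

lemma P0_eq (a b ν θ : ℝ) (n : ℕ) :
    P0 a b ν θ n = (b - a) / (kummerM a b (ν*(1-θ)) * b) * (ν^n / (Nat.factorial n : ℝ)) *
      ∑' k : ℕ, poch a (n+k) / poch (1+b) (n+k) * (-(ν*θ))^k / (Nat.factorial k : ℝ) := by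
  rw [P0, mul_assoc]
  congr 1
  rw [kummerM, ← tsum_mul_left]
  exact tsum_congr fun k => by rw [poch_add, poch_add]; ring

lemma summable_main (a b z : ℝ) (ha : 0 < a) (hab : a ≤ b) (C0 : ℝ) (w : ℕ → ℝ)
    (hw : ∀ k, |w k| ≤ C0 * 2^k) (f : ℕ → ℕ) :
    Summable (fun k : ℕ => w k * (poch (1+a) (f k) / poch (1+b) (f k)) * z^k / (Nat.factorial k : ℝ)) := by
  apply Summable.of_norm_bounded ((Real.summable_pow_div_factorial (2*|z|)).mul_left C0)
  intro k
  have hb0 : (0:ℝ) < 1 + b := by linarith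
  have hpb : 0 < poch (1+b) (f k) := poch_pos_s7 hb0 _
  have hpa : (0:ℝ) ≤ poch (1+a) (f k) := (poch_pos_s7 (by linarith) _).le
  have hc1 : poch (1+a) (f k) / poch (1+b) (f k) ≤ 1 :=
    (div_le_one hpb).mpr (poch_le_s7 (by linarith) (by linarith) _)
  have h1 : ‖w k * (poch (1+a) (f k) / poch (1+b) (f k)) * z^k / (Nat.factorial k : ℝ)‖
      = |w k| * (poch (1+a) (f k) / poch (1+b) (f k)) * |z|^k / (Nat.factorial k : ℝ) := by
    rw [Real.norm_eq_abs, abs_div, abs_mul, abs_mul, abs_pow,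
      abs_of_nonneg (by positivity : (0:ℝ) ≤ poch (1+a) (f k) / poch (1+b) (f k)), Nat.abs_cast]
  rw [h1]
  have h2 : |w k| * (poch (1+a) (f k) / poch (1+b) (f k)) * |z|^k / (Nat.factorial k : ℝ)
      ≤ (C0 * 2^k) * 1 * |z|^k / (Nat.factorial k : ℝ) := by
    have hC0 : 0 ≤ C0 * 2^k := (abs_nonneg _).trans (hw k)
    gcongr
    exact hw k
  refine h2.trans (le_of_eq ?_)
  rw [mul_pow]; ring

set_option maxHeartbeats 2000000 in
lemma stationary_aux (a b s ν : ℝ) (ha0 : 0 < a) (hab : a < b) (hs1 : 1 ≤ s) (n : ℕ) :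
    0 = ν * ((if n = 0 then 0 else P1 a b ν (1/s) (n - 1)) - P1 a b ν (1/s) n)
        + ((n : ℝ) + 1) * P1 a b ν (1/s) (n + 1) - (n : ℝ) * P1 a b ν (1/s) n
        + (s*(a+(n:ℝ))-(n:ℝ)) * P0 a b ν (1/s) n - s*(b-a) * P1 a b ν (1/s) n := by
  have hb0 : 0 < b := lt_trans ha0 hab
  have hb1 : (0:ℝ) < 1 + b := by linarith
  have hs0 : (0:ℝ) < s := by linarith
  have hsne : s ≠ 0 := ne_of_gt hs0
  have h2k : ∀ k : ℕ, (1:ℝ) ≤ 2^k := fun k => one_le_pow₀ (by norm_num)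
  have hk2 : ∀ k : ℕ, (k:ℝ) ≤ 2^k := fun k => by exact_mod_cast (Nat.lt_two_pow_self (n := k)).le
  have hfne : ∀ k : ℕ, ((Nat.factorial k : ℕ) : ℝ) ≠ 0 :=
    fun k => Nat.cast_ne_zero.mpr (Nat.factorial_ne_zero k)
  -- summability of the six series
  have hS1 : Summable (fun k : ℕ => (n:ℝ) * (poch (1+a) (n+k-1) / poch (1+b) (n+k-1)) * (-(ν*(1/s)))^k / (Nat.factorial k : ℝ)) := by
    refine summable_main a b (-(ν*(1/s))) ha0 hab.le (n:ℝ) (fun k => (n:ℝ)) (fun k => ?_) (fun k => n+k-1)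
    rw [abs_of_nonneg (n.cast_nonneg)]
    calc (n:ℝ) = (n:ℝ) * 1 := (mul_one _).symm
      _ ≤ (n:ℝ) * 2^k := mul_le_mul_of_nonneg_left (h2k k) (Nat.cast_nonneg n)
  have hS2 : Summable (fun k : ℕ => (s*(k:ℝ)) * (poch (1+a) (n+k-1) / poch (1+b) (n+k-1)) * (-(ν*(1/s)))^k / (Nat.factorial k : ℝ)) := by
    refine summable_main a b (-(ν*(1/s))) ha0 hab.le s (fun k => s*(k:ℝ)) (fun k => ?_) (fun k => n+k-1)
    rw [abs_of_nonneg (by positivity)]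
    exact mul_le_mul_of_nonneg_left (hk2 k) hs0.le
  have hS3 : Summable (fun k : ℕ => (-(s*(k:ℝ))) * (poch (1+a) (n+k) / poch (1+b) (n+k)) * (-(ν*(1/s)))^k / (Nat.factorial k : ℝ)) := by
    refine summable_main a b (-(ν*(1/s))) ha0 hab.le s (fun k => -(s*(k:ℝ))) (fun k => ?_) (fun k => n+k)
    rw [abs_neg, abs_of_nonneg (by positivity)]
    exact mul_le_mul_of_nonneg_left (hk2 k) hs0.le
  have hS4 : Summable (fun k : ℕ => (-(n:ℝ)) * (poch (1+a) (n+k) / poch (1+b) (n+k)) * (-(ν*(1/s)))^k / (Nat.factorial k : ℝ)) := by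
    refine summable_main a b (-(ν*(1/s))) ha0 hab.le (n:ℝ) (fun k => -(n:ℝ)) (fun k => ?_) (fun k => n+k)
    rw [abs_neg, abs_of_nonneg (n.cast_nonneg)]
    calc (n:ℝ) = (n:ℝ) * 1 := (mul_one _).symm
      _ ≤ (n:ℝ) * 2^k := mul_le_mul_of_nonneg_left (h2k k) (Nat.cast_nonneg n)
  have hS5 : Summable (fun k : ℕ => ((s*(a+(n:ℝ))-(n:ℝ))*(b-a)/(a+(n:ℝ)+(k:ℝ))) * (poch (1+a) (n+k) / poch (1+b) (n+k)) * (-(ν*(1/s)))^k / (Nat.factorial k : ℝ)) := by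
    refine summable_main a b (-(ν*(1/s))) ha0 hab.le (|(s*(a+(n:ℝ))-(n:ℝ))*(b-a)|/a)
      (fun k => (s*(a+(n:ℝ))-(n:ℝ))*(b-a)/(a+(n:ℝ)+(k:ℝ))) (fun k => ?_) (fun k => n+k)
    have hank : (0:ℝ) < a+(n:ℝ)+(k:ℝ) := by
      have := (Nat.cast_nonneg n : (0:ℝ) ≤ n); have := (Nat.cast_nonneg k : (0:ℝ) ≤ k); linarith
    rw [abs_div, abs_of_pos hank]
    have hstep : |(s*(a+(n:ℝ))-(n:ℝ))*(b-a)| / (a+(n:ℝ)+(k:ℝ)) ≤ |(s*(a+(n:ℝ))-(n:ℝ))*(b-a)| / a := by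
      apply div_le_div_of_nonneg_left (abs_nonneg _) ha0
      have := (Nat.cast_nonneg n : (0:ℝ) ≤ n); have := (Nat.cast_nonneg k : (0:ℝ) ≤ k); linarith
    refine hstep.trans ?_
    have hC : (0:ℝ) ≤ |(s*(a+(n:ℝ))-(n:ℝ))*(b-a)|/a := by positivity
    calc |(s*(a+(n:ℝ))-(n:ℝ))*(b-a)|/a = |(s*(a+(n:ℝ))-(n:ℝ))*(b-a)|/a * 1 := (mul_one _).symm
      _ ≤ |(s*(a+(n:ℝ))-(n:ℝ))*(b-a)|/a * 2^k := mul_le_mul_of_nonneg_left (h2k k) hC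
  have hS6 : Summable (fun k : ℕ => (-(s*(b-a))) * (poch (1+a) (n+k) / poch (1+b) (n+k)) * (-(ν*(1/s)))^k / (Nat.factorial k : ℝ)) := by
    refine summable_main a b (-(ν*(1/s))) ha0 hab.le (s*(b-a)) (fun k => -(s*(b-a))) (fun k => ?_) (fun k => n+k)
    have hba : (0:ℝ) ≤ s*(b-a) := by nlinarith
    rw [abs_neg, abs_of_nonneg hba]
    calc s*(b-a) = s*(b-a) * 1 := (mul_one _).symm
      _ ≤ s*(b-a) * 2^k := mul_le_mul_of_nonneg_left (h2k k) hba
  -- pointwise vanishing of the combined coefficient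
  have key : ∀ k : ℕ, (n:ℝ) * (poch (1+a) (n+k-1) / poch (1+b) (n+k-1)) * (-(ν*(1/s)))^k / (Nat.factorial k : ℝ) + (s*(k:ℝ)) * (poch (1+a) (n+k-1) / poch (1+b) (n+k-1)) * (-(ν*(1/s)))^k / (Nat.factorial k : ℝ) + (-(s*(k:ℝ))) * (poch (1+a) (n+k) / poch (1+b) (n+k)) * (-(ν*(1/s)))^k / (Nat.factorial k : ℝ) + (-(n:ℝ)) * (poch (1+a) (n+k) / poch (1+b) (n+k)) * (-(ν*(1/s)))^k / (Nat.factorial k : ℝ) + ((s*(a+(n:ℝ))-(n:ℝ))*(b-a)/(a+(n:ℝ)+(k:ℝ))) * (poch (1+a) (n+k) / poch (1+b) (n+k)) * (-(ν*(1/s)))^k / (Nat.factorial k : ℝ) + (-(s*(b-a))) * (poch (1+a) (n+k) / poch (1+b) (n+k)) * (-(ν*(1/s)))^k / (Nat.factorial k : ℝ) = 0 := by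
    intro k
    rcases eq_or_ne (n+k) 0 with h0 | hne0
    · obtain ⟨hn, hk⟩ := Nat.add_eq_zero.mp h0
      subst hn; subst hk
      norm_num [poch]
      field_simp
      ring
    · obtain ⟨j, hj⟩ : ∃ j, n + k = j + 1 := ⟨(n+k)-1, by omega⟩
      rw [show n+k-1 = j from by omega, hj, poch_succ, poch_succ]
      have hr : (n:ℝ) + (k:ℝ) = (j:ℝ) + 1 := by exact_mod_cast congrArg (Nat.cast : ℕ → ℝ) hj
      have hj' : (j:ℝ) = (n:ℝ) + (k:ℝ) - 1 := by linarith
      rw [hj']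
      have hBj : poch (1+b) j ≠ 0 := (poch_pos_s7 hb1 j).ne'
      have hd1 : (1:ℝ)+b+((n:ℝ)+(k:ℝ)-1) ≠ 0 := by
        have := (Nat.cast_nonneg n : (0:ℝ) ≤ n); have := (Nat.cast_nonneg k : (0:ℝ) ≤ k)
        have : (0:ℝ) < 1+b+((n:ℝ)+(k:ℝ)-1) := by linarith
        linarith
      have hd2 : a+(n:ℝ)+(k:ℝ) ≠ 0 := by
        have := (Nat.cast_nonneg n : (0:ℝ) ≤ n); have := (Nat.cast_nonneg k : (0:ℝ) ≤ k)
        positivity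
      generalize (-(ν*(1/s)))^k = Zk
      field_simp
      ring
  -- combine the six tsums
  have hT : (∑' k : ℕ, (n:ℝ) * (poch (1+a) (n+k-1) / poch (1+b) (n+k-1)) * (-(ν*(1/s)))^k / (Nat.factorial k : ℝ)) + (∑' k : ℕ, (s*(k:ℝ)) * (poch (1+a) (n+k-1) / poch (1+b) (n+k-1)) * (-(ν*(1/s)))^k / (Nat.factorial k : ℝ)) + (∑' k : ℕ, (-(s*(k:ℝ))) * (poch (1+a) (n+k) / poch (1+b) (n+k)) * (-(ν*(1/s)))^k / (Nat.factorial k : ℝ)) + (∑' k : ℕ, (-(n:ℝ)) * (poch (1+a) (n+k) / poch (1+b) (n+k)) * (-(ν*(1/s)))^k / (Nat.factorial k : ℝ))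
      + (∑' k : ℕ, ((s*(a+(n:ℝ))-(n:ℝ))*(b-a)/(a+(n:ℝ)+(k:ℝ))) * (poch (1+a) (n+k) / poch (1+b) (n+k)) * (-(ν*(1/s)))^k / (Nat.factorial k : ℝ)) + (∑' k : ℕ, (-(s*(b-a))) * (poch (1+a) (n+k) / poch (1+b) (n+k)) * (-(ν*(1/s)))^k / (Nat.factorial k : ℝ)) = 0 := by
    rw [← Summable.tsum_add hS1 hS2, ← Summable.tsum_add (hS1.add hS2) hS3, ← Summable.tsum_add ((hS1.add hS2).add hS3) hS4,
      ← Summable.tsum_add (((hS1.add hS2).add hS3).add hS4) hS5,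
      ← Summable.tsum_add ((((hS1.add hS2).add hS3).add hS4).add hS5) hS6]
    calc _ = ∑' (_ : ℕ), (0:ℝ) := tsum_congr fun k => key k
      _ = 0 := tsum_zero
  have h1 : ν * (if n = 0 then 0 else P1 a b ν (1/s) (n-1)) = (a / (kummerM a b (ν*(1-1/s)) * b) * (ν^n / (Nat.factorial n : ℝ))) * ∑' k : ℕ, (n:ℝ) * (poch (1+a) (n+k-1) / poch (1+b) (n+k-1)) * (-(ν*(1/s)))^k / (Nat.factorial k : ℝ) := by
    rcases n with _ | p
    · rw [if_pos rfl]
      simp only [Nat.cast_zero, zero_mul, zero_div, tsum_zero, mul_zero]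
    · rw [if_neg (Nat.succ_ne_zero p), show p+1-1 = p from rfl, P1_eq a b ν (1/s) p,
        ← tsum_mul_left, ← tsum_mul_left, ← tsum_mul_left]
      refine tsum_congr fun k => ?_
      have hidx2 : p+1+k-1 = p+k := by omega
      simp only [hidx2]
      have hp1 : ((p:ℝ)+1) ≠ 0 := by positivity
      have hpf : ((Nat.factorial p : ℕ) : ℝ) ≠ 0 := hfne p
      have hcan : ν * (ν^p / (Nat.factorial p : ℝ)) = ν^(p+1) / (Nat.factorial (p+1) : ℝ) * ((p:ℝ)+1) := by
        rw [Nat.factorial_succ, pow_succ]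
        push_cast
        field_simp
      push_cast
      linear_combination (a / (kummerM a b (ν*(1-1/s)) * b) * (poch (1+a) (p+k) / poch (1+b) (p+k)) * (-(ν*(1/s)))^k / (Nat.factorial k : ℝ)) * hcan
  have e2 : (∑' k : ℕ, (s*(k:ℝ)) * (poch (1+a) (n+k-1) / poch (1+b) (n+k-1)) * (-(ν*(1/s)))^k / (Nat.factorial k : ℝ)) = ∑' k : ℕ, (-ν) * (poch (1+a) (n+k) / poch (1+b) (n+k) * (-(ν*(1/s)))^k / (Nat.factorial k : ℝ)) := by
    rw [Summable.tsum_eq_zero_add hS2]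
    norm_num
    refine tsum_congr fun k => ?_
    rw [pow_succ, Nat.factorial_succ]
    push_cast
    have hk1 : ((k:ℝ)+1) ≠ 0 := by positivity
    have hsk : s^k ≠ 0 := pow_ne_zero _ hsne
    have hBk : poch (1+b) (n+k) ≠ 0 := (poch_pos_s7 hb1 _).ne'
    field_simp [hsne, hk1, hsk, hfne k, hBk]
  have h2 : -(ν * P1 a b ν (1/s) n) = (a / (kummerM a b (ν*(1-1/s)) * b) * (ν^n / (Nat.factorial n : ℝ))) * ∑' k : ℕ, (s*(k:ℝ)) * (poch (1+a) (n+k-1) / poch (1+b) (n+k-1)) * (-(ν*(1/s)))^k / (Nat.factorial k : ℝ) := by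
    rw [P1_eq a b ν (1/s) n, e2, ← tsum_mul_left, ← tsum_mul_left, ← tsum_neg, ← tsum_mul_left]
    exact tsum_congr fun k => by ring
  have e3 : (∑' k : ℕ, (-(s*(k:ℝ))) * (poch (1+a) (n+k) / poch (1+b) (n+k)) * (-(ν*(1/s)))^k / (Nat.factorial k : ℝ)) = ∑' k : ℕ, ν * (poch (1+a) (n+1+k) / poch (1+b) (n+1+k) * (-(ν*(1/s)))^k / (Nat.factorial k : ℝ)) := by
    rw [Summable.tsum_eq_zero_add hS3]
    norm_num
    refine tsum_congr fun k => ?_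
    have hidx : n+(k+1) = n+1+k := by omega
    simp only [hidx]
    rw [pow_succ, Nat.factorial_succ]
    push_cast
    have hk1 : ((k:ℝ)+1) ≠ 0 := by positivity
    have hsk : s^k ≠ 0 := pow_ne_zero _ hsne
    have hBk : poch (1+b) (n+1+k) ≠ 0 := (poch_pos_s7 hb1 _).ne'
    field_simp [hsne, hk1, hsk, hfne k, hBk]
  have hcoef : ((n:ℝ)+1) * (ν^(n+1) / (Nat.factorial (n+1) : ℝ)) = ν^n / (Nat.factorial n : ℝ) * ν := by
    rw [Nat.factorial_succ, pow_succ]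
    push_cast
    have hn1 : ((n:ℝ)+1) ≠ 0 := by positivity
    field_simp
  have h3 : ((n:ℝ)+1) * P1 a b ν (1/s) (n+1) = (a / (kummerM a b (ν*(1-1/s)) * b) * (ν^n / (Nat.factorial n : ℝ))) * ∑' k : ℕ, (-(s*(k:ℝ))) * (poch (1+a) (n+k) / poch (1+b) (n+k)) * (-(ν*(1/s)))^k / (Nat.factorial k : ℝ) := by
    rw [P1_eq a b ν (1/s) (n+1), e3, ← tsum_mul_left, ← tsum_mul_left, ← tsum_mul_left]
    refine tsum_congr fun k => ?_
    linear_combination (a / (kummerM a b (ν*(1-1/s)) * b) * (poch (1+a) (n+1+k) / poch (1+b) (n+1+k) * (-(ν*(1/s)))^k / (Nat.factorial k : ℝ))) * hcoef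
  have h4 : -((n:ℝ) * P1 a b ν (1/s) n) = (a / (kummerM a b (ν*(1-1/s)) * b) * (ν^n / (Nat.factorial n : ℝ))) * ∑' k : ℕ, (-(n:ℝ)) * (poch (1+a) (n+k) / poch (1+b) (n+k)) * (-(ν*(1/s)))^k / (Nat.factorial k : ℝ) := by
    rw [P1_eq a b ν (1/s) n, ← tsum_mul_left, ← tsum_mul_left, ← tsum_neg, ← tsum_mul_left]
    exact tsum_congr fun k => by ring
  have h5 : (s*(a+(n:ℝ))-(n:ℝ)) * P0 a b ν (1/s) n = (a / (kummerM a b (ν*(1-1/s)) * b) * (ν^n / (Nat.factorial n : ℝ))) * ∑' k : ℕ, ((s*(a+(n:ℝ))-(n:ℝ))*(b-a)/(a+(n:ℝ)+(k:ℝ))) * (poch (1+a) (n+k) / poch (1+b) (n+k)) * (-(ν*(1/s)))^k / (Nat.factorial k : ℝ) := by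
    rw [P0_eq a b ν (1/s) n, ← tsum_mul_left, ← tsum_mul_left, ← tsum_mul_left]
    refine tsum_congr fun k => ?_
    have hd : a + ((n:ℝ)+(k:ℝ)) ≠ 0 := by
      have hn := (Nat.cast_nonneg n : (0:ℝ) ≤ n); have hk := (Nat.cast_nonneg k : (0:ℝ) ≤ k)
      positivity
    have hpa : poch a (n+k) = a * poch (1+a) (n+k) / (a + ((n:ℝ)+(k:ℝ))) := by
      rw [eq_div_iff hd]
      have h := poch_mul_eq a (n+k)
      push_cast at h
      linear_combination -h
    rw [hpa]
    push_cast
    ring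
  have h6 : -(s*(b-a) * P1 a b ν (1/s) n) = (a / (kummerM a b (ν*(1-1/s)) * b) * (ν^n / (Nat.factorial n : ℝ))) * ∑' k : ℕ, (-(s*(b-a))) * (poch (1+a) (n+k) / poch (1+b) (n+k)) * (-(ν*(1/s)))^k / (Nat.factorial k : ℝ) := by
    rw [P1_eq a b ν (1/s) n, ← tsum_mul_left, ← tsum_mul_left, ← tsum_neg, ← tsum_mul_left]
    exact tsum_congr fun k => by ring
  symm
  linear_combination h1 + h2 + h3 + h4 + h5 + h6 + (a / (kummerM a b (ν*(1-1/s)) * b) * (ν^n / (Nat.factorial n : ℝ))) * hT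

/-- Stationarity of the active-state probabilities. -/
theorem active_state_stationary (μ0 μ1 γ ν : ℝ) (hμ0 : 0 < μ0) (hμ1 : 0 ≤ μ1)
    (hγ : 0 < γ) (hν : 0 < ν)
    (a b θ : ℝ) (ha : a = μ0 / (1 + μ1)) (hb : b = (μ0 + γ) / (1 + μ1))
    (hθ : θ = 1 / (1 + μ1)) (n : ℕ) :
    0 = ν * ((if n = 0 then 0 else P1 a b ν θ (n - 1)) - P1 a b ν θ n)
        + ((n : ℝ) + 1) * P1 a b ν θ (n + 1) - (n : ℝ) * P1 a b ν θ n
        + (μ0 + μ1 * n) * P0 a b ν θ n - γ * P1 a b ν θ n := by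
  have hs0 : (0:ℝ) < 1 + μ1 := by linarith
  have ha0 : 0 < a := by rw [ha]; positivity
  have hab : a < b := by
    rw [ha, hb, div_lt_div_iff₀ hs0 hs0]
    nlinarith
  have e1 : μ0 + μ1 * (n:ℝ) = (1+μ1)*(a+(n:ℝ))-(n:ℝ) := by
    rw [ha]; field_simp; ring
  have e2 : γ = (1+μ1)*(b-a) := by
    rw [ha, hb]; field_simp; ring
  rw [hθ, e1, e2]
  exact stationary_aux a b (1+μ1) ν ha0 hab (by linarith) n
end
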